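/- Let A be an n×n matrix with nonnegative entries and b ∈ ℝ^n with all entries strictly positive. Suppose there exists a permutation σ of [n] such that for every i, a_{i,σ(i)} > 0 and b_i > max_{j ≠ i} a_{i,σ(j)} · b_j / a_{j,σ(j)}. Then the limit determinant |A|_∞ = ⊞_{π∈S_n} sgn(π)Π_i a_{i,π(i)} is nonzero; in fact |A|_∞ = sgn(σ)·Π_{j∈[n]} a_{j,σ(j)} with appropriate normalization argument, and in particular |A|_∞ ≠ 0. -/

import Mathlib

/-!
Write `c j = A j (σ j)`. The dominance condition says `A i (σ j) ≤ b i * c j / b j`, with equality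
for `j = i` and strict inequality otherwise. For a permutation `π = σ ∘ ρ` the product
`∏ i, b i * c (ρ i) / b (ρ i)` telescopes to `∏ c`, so `∏ A i (π i) < ∏ c` as soon as `π ≠ σ`.
The term of `σ` therefore strictly dominates every other term of the limit determinant in absolute
value, and a strictly dominant term is the value of `⊞`.
-/

open scoped Classical

/-- ξ_I[x](α): signed count of occurrences of α among the x i, i ∈ I. -/
noncomputable def xiF {ι : Type*} (I : Finset ι) (x : ι → ℝ) (α : ℝ) : ℤ :=
  ((I.filter fun i => x i = α).card : ℤ) - ((I.filter fun i => x i = -α).card : ℤ)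

/-- the n-ary limit operation F_I, i.e. ⊞_{i∈I} x_i. -/
noncomputable def FF {ι : Type*} (I : Finset ι) (x : ι → ℝ) : ℝ :=
  if h : (I.filter fun j => xiF I x (x j) ≠ 0).Nonempty then
    if 0 < xiF I x ((I.filter fun j => xiF I x (x j) ≠ 0).sup' h fun i => |x i|) then
      (I.filter fun j => xiF I x (x j) ≠ 0).sup' h x
    else if xiF I x ((I.filter fun j => xiF I x (x j) ≠ 0).sup' h fun i => |x i|) < 0 then
      (I.filter fun j => xiF I x (x j) ≠ 0).inf' h x
    else 0
  else 0

/-- determinant in limit -/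
noncomputable def detInf {n : ℕ} (A : Matrix (Fin n) (Fin n) ℝ) : ℝ :=
  FF Finset.univ fun σ : Equiv.Perm (Fin n) =>
    ((Equiv.Perm.sign σ : ℤ) : ℝ) * ∏ i, A i (σ i)

open Finset

section LimitOperation

variable {ι : Type*} (I : Finset ι) (x : ι → ℝ)

lemma xiF_neg (α : ℝ) : xiF I x (-α) = -xiF I x α := by
  simp only [xiF, neg_neg, neg_sub]

variable {I x} {i₀ : ι}

lemma xiF_self_eq_one_of_abs_lt (hi₀ : i₀ ∈ I) (hx₀ : x i₀ ≠ 0)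
    (hmax : ∀ j ∈ I, j ≠ i₀ → |x j| < |x i₀|) : xiF I x (x i₀) = 1 := by
  have hsame : I.filter (fun i => x i = x i₀) = {i₀} := by
    ext j
    simp only [mem_filter, mem_singleton]
    refine ⟨fun ⟨hj, hxj⟩ => ?_, by rintro rfl; exact ⟨hi₀, rfl⟩⟩
    by_contra hne
    exact (hmax j hj hne).ne (by rw [hxj])
  have hopp : I.filter (fun i => x i = -x i₀) = ∅ := by
    refine filter_eq_empty_iff.mpr fun j hj hxj => ?_
    rcases eq_or_ne j i₀ with rfl | hne
    · exact hx₀ (by linarith)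
    · exact (hmax j hj hne).ne (by rw [hxj, abs_neg])
  simp [xiF, hsame, hopp]

lemma FF_eq_of_abs_lt (hi₀ : i₀ ∈ I) (hx₀ : x i₀ ≠ 0)
    (hmax : ∀ j ∈ I, j ≠ i₀ → |x j| < |x i₀|) : FF I x = x i₀ := by
  have hxi := xiF_self_eq_one_of_abs_lt hi₀ hx₀ hmax
  set S := I.filter fun j => xiF I x (x j) ≠ 0
  have hS : i₀ ∈ S := mem_filter.mpr ⟨hi₀, by simp [hxi]⟩
  have hle : ∀ j ∈ S, |x j| ≤ |x i₀| := fun j hj => by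
    rcases eq_or_ne j i₀ with rfl | hne
    · exact le_rfl
    · exact (hmax j (mem_filter.mp hj).1 hne).le
  have hsup : S.sup' ⟨i₀, hS⟩ (fun i => |x i|) = |x i₀| :=
    le_antisymm (sup'_le _ _ hle) (le_sup' (fun i => |x i|) hS)
  rw [FF, dif_pos ⟨i₀, hS⟩, hsup]
  rcases hx₀.lt_or_gt with hneg | hpos
  · rw [abs_of_neg hneg, xiF_neg, hxi, if_neg (by norm_num), if_pos (by norm_num)]
    refine le_antisymm (inf'_le x hS) (le_inf' _ x fun j hj => ?_)
    linarith [neg_abs_le (x j), hle j hj, abs_of_neg hneg]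
  · rw [abs_of_pos hpos, hxi, if_pos one_pos]
    refine le_antisymm (sup'_le _ x fun j hj => ?_) (le_sup' x hS)
    linarith [le_abs_self (x j), hle j hj, abs_of_pos hpos]

end LimitOperation

lemma detInf_eq_of_abs_prod_lt {n : ℕ} (A : Matrix (Fin n) (Fin n) ℝ) (σ : Equiv.Perm (Fin n))
    (hσ : ∏ i, A i (σ i) ≠ 0)
    (hlt : ∀ π ≠ σ, |∏ i, A i (π i)| < |∏ i, A i (σ i)|) :
    detInf A = ((Equiv.Perm.sign σ : ℤ) : ℝ) * ∏ i, A i (σ i) := by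
  refine FF_eq_of_abs_lt (mem_univ σ) (mul_ne_zero (by simp) hσ) fun π _ hπ => ?_
  simpa only [abs_mul, abs_unit_intCast, one_mul] using hlt π hπ

lemma prod_mul_div_comp_perm {ι K : Type*} [Fintype ι] [Field K] (ρ : Equiv.Perm ι)
    (b c : ι → K) (hb : ∀ i, b i ≠ 0) : ∏ i, b i * c (ρ i) / b (ρ i) = ∏ i, c i := by
  have hprod : ∏ i, b i ≠ 0 := prod_ne_zero_iff.mpr fun i _ => hb i
  rw [prod_div_distrib, prod_mul_distrib, Equiv.prod_comp ρ c, Equiv.prod_comp ρ b,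
    mul_div_cancel_left₀ _ hprod]

lemma Finset.prod_lt_prod_of_nonneg {ι R : Type*} [CommMonoidWithZero R] [PartialOrder R]
    [ZeroLEOneClass R] [PosMulStrictMono R] [Nontrivial R] {s : Finset ι} {f g : ι → R}
    (hf : ∀ i ∈ s, 0 ≤ f i) (hg : ∀ i ∈ s, 0 < g i) (hfg : ∀ i ∈ s, f i ≤ g i)
    (hlt : ∃ i ∈ s, f i < g i) : ∏ i ∈ s, f i < ∏ i ∈ s, g i := by
  by_cases hzero : ∃ i ∈ s, f i = 0
  · obtain ⟨i, hi, hfi⟩ := hzero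
    rw [prod_eq_zero hi hfi]
    exact prod_pos hg
  · exact prod_lt_prod (fun i hi => (hf i hi).lt_of_ne' fun h => hzero ⟨i, hi, h⟩) hfg hlt

lemma prod_lt_prod_of_dominant {ι : Type*} [Fintype ι] (A : ι → ι → ℝ) (b : ι → ℝ)
    (σ : Equiv.Perm ι) (hA : ∀ i j, 0 ≤ A i j) (hb : ∀ i, 0 < b i)
    (hσ : ∀ i, 0 < A i (σ i)) (hdom : ∀ i j, j ≠ i → A i (σ j) * b j / A j (σ j) < b i)
    {π : Equiv.Perm ι} (hπ : π ≠ σ) : ∏ i, A i (π i) < ∏ i, A i (σ i) := by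
  set ρ := σ⁻¹ * π
  have hπρ : ∀ i, π i = σ (ρ i) := fun i => by simp [ρ]
  set g : ι → ℝ := fun i => b i * A (ρ i) (σ (ρ i)) / b (ρ i)
  have hlt : ∀ i, ρ i ≠ i → A i (π i) < g i := fun i hne => by
    have hd := hdom i (ρ i) hne
    rw [div_lt_iff₀ (hσ (ρ i))] at hd
    rw [hπρ, lt_div_iff₀ (hb (ρ i))]
    linarith
  have hle : ∀ i, A i (π i) ≤ g i := fun i => by
    rcases eq_or_ne (ρ i) i with he | hne
    · simp only [g, hπρ, he, mul_div_cancel_left₀ _ (hb i).ne', le_refl]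
    · exact (hlt i hne).le
  obtain ⟨i₁, hi₁⟩ : ∃ i, ρ i ≠ i := by
    by_contra! hall
    exact hπ (Equiv.ext fun i => by rw [hπρ, hall])
  calc ∏ i, A i (π i) < ∏ i, g i :=
        prod_lt_prod_of_nonneg (fun i _ => hA _ _)
          (fun i _ => div_pos (mul_pos (hb i) (hσ _)) (hb _)) (fun i _ => hle i)
          ⟨i₁, mem_univ _, hlt i₁ hi₁⟩
    _ = ∏ i, A i (σ i) :=
        prod_mul_div_comp_perm ρ b (fun j => A j (σ j)) fun i => (hb i).ne'

theorem stmt_18 {n : ℕ} (A : Matrix (Fin n) (Fin n) ℝ) (b : Fin n → ℝ)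
    (hA : ∀ i j, 0 ≤ A i j) (hb : ∀ i, 0 < b i) (σ : Equiv.Perm (Fin n))
    (hσ : ∀ i, 0 < A i (σ i))
    (hdom : ∀ i j, j ≠ i → A i (σ j) * b j / A j (σ j) < b i) :
    detInf A = ((Equiv.Perm.sign σ : ℤ) : ℝ) * ∏ j, A j (σ j) ∧ detInf A ≠ 0 := by
  have hσ_pos : 0 < ∏ j, A j (σ j) := prod_pos fun i _ => hσ i
  have hdet : detInf A = ((Equiv.Perm.sign σ : ℤ) : ℝ) * ∏ j, A j (σ j) := by
    refine detInf_eq_of_abs_prod_lt A σ hσ_pos.ne' fun π hπ => ?_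
    rw [abs_of_nonneg (prod_nonneg fun i _ => hA _ _), abs_of_pos hσ_pos]
    exact prod_lt_prod_of_dominant A b σ hA hb hσ hdom hπ
  exact ⟨hdet, hdet ▸ mul_ne_zero (by simp) hσ_pos.ne'⟩
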